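/- arXiv:2604.19712 — 2 statements merged into one kernel-verified Lean document; each statement's English description precedes it below -/
import Mathlib

section
/- Let s ≥ 1 be an integer, let 1 = q₀ > q₁ > ... > q_s > q_{s+1} = 0 be reals, and let 1 = k₀ < k₁ < ... < k_s = k be integers with k_{i+1}/k_i ∈ ℤ for every i. Let Q = Σ_{i=0}^{s} (q_i − q_{i+1}) (I_{k/k_i} ⊗ J_{k_i}) be the s-level ultrametric overlap matrix. Define c_{w1} = 1/(1 − q₁), S₁ = c_{w1}, and recursively for i = 1, ..., s: c_{w(i+1)} = −S_i² · ( 1/(q_i − q_{i+1}) + k_i S_i )^{−1} and S_{i+1} = S_i + k_i c_{w(i+1)}. Then Q is invertible and Q^{−1} = c_{w1} I_k + Σ_{i=1}^{s} c_{w(i+1)} (I_{k/k_i} ⊗ J_{k_i}). -/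
/-! The matrices `P i = I_{k/k_i} ⊗ J_{k_i}` form a chain, `P i * P j = k_i • P j` for `i ≤ j`,
so the product of `∑ a_i P_i` and `∑ b_j P_j` is again a combination of the `P m`, with
coefficients given by a triangular formula. With `T m = weightedGapSum q k m`, the recursion for
`S` says exactly `1 / S (m+1) = 1 / S m + (q_m - q_{m+1}) k_m`, i.e. `S m = (T m)⁻¹`; using this,
the coefficient of `P m` in the product of `Q` with the claimed inverse is `1` for `m = 0` (where
`P 0 = 1`) and `0` otherwise. -/

/-- The `k × k` block-diagonal matrix `I_{k/ki} ⊗ J_{ki}` with `k/ki` diagonal blocks equal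
to the `ki × ki` all-ones matrix. -/
def blockOnes (k ki : ℕ) : Matrix (Fin k) (Fin k) ℝ :=
  Matrix.of fun a b => if (a : ℕ) / ki = (b : ℕ) / ki then 1 else 0

open Finset Matrix

theorem card_filter_div_eq {k d : ℕ} (hd : d ∣ k) (a : Fin k) :
    #{c : Fin k | (c : ℕ) / d = (a : ℕ) / d} = d := by
  obtain rfl | hpos := Nat.eq_zero_or_pos d
  · obtain rfl := Nat.eq_zero_of_zero_dvd hd
    exact a.elim0
  set t := (a : ℕ) / d
  have hblock : t * d + d ≤ k := by
    have := Nat.div_lt_div_of_lt_of_dvd hd a.isLt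
    calc t * d + d = (t + 1) * d := by ring
      _ ≤ k / d * d := Nat.mul_le_mul_right _ this
      _ = k := Nat.div_mul_cancel hd
  have hfiber : {x ∈ Iio k | x / d = t} = Ico (t * d) (t * d + d) := by
    ext x
    simp only [mem_filter, mem_Iio, mem_Ico, Nat.div_eq_iff hpos]
    omega
  calc #{c : Fin k | (c : ℕ) / d = t}
      = #(map Fin.valEmbedding {c : Fin k | (c : ℕ) / d = t}) := (card_map _).symm
    _ = #(Ico (t * d) (t * d + d)) := by
      rw [← hfiber, ← Fin.map_valEmbedding_univ, filter_map]; rfl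
    _ = d := by simp

theorem Nat.div_eq_div_of_dvd_of_div_eq {d e x y : ℕ} (hde : d ∣ e) (h : x / d = y / d) :
    x / e = y / e := by
  obtain ⟨m, rfl⟩ := hde
  rw [← Nat.div_div_eq_div_mul, ← Nat.div_div_eq_div_mul, h]

theorem blockOnes_one (k : ℕ) : blockOnes k 1 = 1 := by
  ext a b
  simp [blockOnes, one_apply, Fin.val_inj]

theorem blockOnes_transpose (k d : ℕ) : (blockOnes k d)ᵀ = blockOnes k d := by
  ext a b
  exact if_congr eq_comm rfl rfl

theorem blockOnes_mul_blockOnes_of_dvd {k d e : ℕ} (hde : d ∣ e) (hek : e ∣ k) :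
    blockOnes k d * blockOnes k e = (d : ℝ) • blockOnes k e := by
  ext a b
  have hfactor : ∀ c : Fin k, (if (a : ℕ) / d = c / d then (1 : ℝ) else 0) *
      (if (c : ℕ) / e = b / e then 1 else 0) =
      if (c : ℕ) / d = a / d then (if (a : ℕ) / e = b / e then 1 else 0) else 0 := by
    intro c
    by_cases hc : (c : ℕ) / d = a / d
    · simp [hc, Nat.div_eq_div_of_dvd_of_div_eq hde hc]
    · simp [hc, Ne.symm hc]
  simp only [mul_apply, blockOnes, of_apply, Matrix.smul_apply, smul_eq_mul, hfactor]
  rw [← sum_filter, sum_const, card_filter_div_eq (hde.trans hek), nsmul_eq_mul]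

theorem blockOnes_mul_blockOnes_of_dvd' {k d e : ℕ} (hde : d ∣ e) (hek : e ∣ k) :
    blockOnes k e * blockOnes k d = (d : ℝ) • blockOnes k e := by
  simpa only [transpose_mul, blockOnes_transpose, transpose_smul] using
    congrArg transpose (blockOnes_mul_blockOnes_of_dvd hde hek)

theorem sum_smul_mul_sum_smul_of_nested {R A : Type*} [CommSemiring R] [Semiring A] [Algebra R A]
    (P : ℕ → A) (κ a b : ℕ → R) (n : ℕ)
    (hP : ∀ i j, i ≤ j → j < n → P i * P j = κ i • P j ∧ P j * P i = κ i • P j) :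
    (∑ i ∈ range n, a i • P i) * ∑ j ∈ range n, b j • P j =
      ∑ m ∈ range n,
        (a m * ∑ j ∈ range m, κ j * b j + b m * ∑ i ∈ range (m + 1), a i * κ i) • P m := by
  induction n with
  | zero => simp
  | succ n ih =>
    have hleft : (∑ i ∈ range n, a i • P i) * (b n • P n) =
        (b n * ∑ i ∈ range n, a i * κ i) • P n := by
      rw [sum_mul, mul_sum, sum_smul]
      refine sum_congr rfl fun i hi => ?_
      rw [smul_mul_smul_comm, (hP i n (mem_range.mp hi).le n.lt_succ_self).1, smul_smul]
      ring_nf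
    have hright : (a n • P n) * ∑ j ∈ range n, b j • P j =
        (a n * ∑ j ∈ range n, κ j * b j) • P n := by
      rw [mul_sum, mul_sum, sum_smul]
      refine sum_congr rfl fun j hj => ?_
      rw [smul_mul_smul_comm, (hP j n (mem_range.mp hj).le n.lt_succ_self).2, smul_smul]
      ring_nf
    have hdiag : (a n • P n) * (b n • P n) = (b n * (a n * κ n)) • P n := by
      rw [smul_mul_smul_comm, (hP n n le_rfl n.lt_succ_self).1, smul_smul]
      ring_nf
    rw [sum_range_succ, sum_range_succ, add_mul, mul_add, mul_add,
      ih fun i j hij hj => hP i j hij (Nat.lt_succ_of_lt hj), hleft, hright, hdiag,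
      sum_range_succ _ n, sum_range_succ (fun i => a i * κ i) n]
    simp only [add_smul, mul_add]
    abel

def weightedGapSum (q : ℕ → ℝ) (k : ℕ → ℕ) (m : ℕ) : ℝ :=
  ∑ i ∈ range m, (q i - q (i + 1)) * k i

section

variable {s : ℕ} {q : ℕ → ℝ} {k : ℕ → ℕ} {c S : ℕ → ℝ}

theorem weightedGapSum_pos (hqdec : ∀ i ≤ s, q (i + 1) < q i) (hk0 : k 0 = 1) {m : ℕ}
    (hm : 1 ≤ m) (hms : m ≤ s + 1) : 0 < weightedGapSum q k m := by
  refine sum_pos' (fun i hi => ?_) ⟨0, mem_range.mpr hm, ?_⟩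
  · have := hqdec i (by have := mem_range.mp hi; omega)
    exact mul_nonneg (by linarith) (Nat.cast_nonneg _)
  · have := hqdec 0 (Nat.zero_le s)
    rw [hk0, Nat.cast_one, mul_one]
    linarith

theorem weightedGapSum_succ (q : ℕ → ℝ) (k : ℕ → ℕ) (m : ℕ) :
    weightedGapSum q k (m + 1) = weightedGapSum q k m + (q m - q (m + 1)) * k m :=
  sum_range_succ _ _

theorem S_eq_inv_weightedGapSum (hq0 : q 0 = 1) (hqdec : ∀ i ≤ s, q (i + 1) < q i) (hk0 : k 0 = 1)
    (hc1 : c 1 = 1 / (1 - q 1)) (hS1 : S 1 = c 1)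
    (hc : ∀ i, 1 ≤ i → i ≤ s →
      c (i + 1) = -S i ^ 2 * (1 / (q i - q (i + 1)) + (k i : ℝ) * S i)⁻¹)
    (hS : ∀ i, 1 ≤ i → i ≤ s → S (i + 1) = S i + (k i : ℝ) * c (i + 1))
    {m : ℕ} (hm : 1 ≤ m) (hms : m ≤ s + 1) : S m = (weightedGapSum q k m)⁻¹ := by
  induction m, hm using Nat.le_induction with
  | base => simp [weightedGapSum, hS1, hc1, hq0, hk0]
  | succ m hm ih =>
    have hT := weightedGapSum_pos hqdec hk0 hm (by omega)
    have ha : 0 < q m - q (m + 1) := sub_pos.mpr (hqdec m (by omega))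
    have hκ : (0 : ℝ) ≤ k m := Nat.cast_nonneg _
    have hTa : 0 < weightedGapSum q k m + (q m - q (m + 1)) * k m := by positivity
    rw [hS m hm (by omega), hc m hm (by omega), ih (by omega), weightedGapSum_succ]
    field_simp
    ring

theorem sum_cast_mul_eq_S (hk0 : k 0 = 1) (hS1 : S 1 = c 1)
    (hS : ∀ i, 1 ≤ i → i ≤ s → S (i + 1) = S i + (k i : ℝ) * c (i + 1))
    {m : ℕ} (hm : 1 ≤ m) (hms : m ≤ s + 1) : ∑ j ∈ range m, (k j : ℝ) * c (j + 1) = S m := by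
  induction m, hm using Nat.le_induction with
  | base => simp [hS1, hk0]
  | succ m hm ih => rw [sum_range_succ, ih (by omega), hS m hm (by omega)]

theorem gap_mul_sum_add_mul_weightedGapSum_eq_ite (hq0 : q 0 = 1)
    (hqdec : ∀ i ≤ s, q (i + 1) < q i) (hk0 : k 0 = 1)
    (hc1 : c 1 = 1 / (1 - q 1)) (hS1 : S 1 = c 1)
    (hc : ∀ i, 1 ≤ i → i ≤ s →
      c (i + 1) = -S i ^ 2 * (1 / (q i - q (i + 1)) + (k i : ℝ) * S i)⁻¹)
    (hS : ∀ i, 1 ≤ i → i ≤ s → S (i + 1) = S i + (k i : ℝ) * c (i + 1))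
    {m : ℕ} (hms : m ≤ s) :
    (q m - q (m + 1)) * ∑ j ∈ range m, (k j : ℝ) * c (j + 1) +
      c (m + 1) * weightedGapSum q k (m + 1) = if m = 0 then 1 else 0 := by
  obtain rfl | hm := Nat.eq_zero_or_pos m
  · have : 1 - q 1 ≠ 0 := by linarith [hq0 ▸ hqdec 0 hms]
    simp [weightedGapSum, hq0, hk0, hc1, this]
  have hT := weightedGapSum_pos hqdec hk0 hm (by omega)
  have ha : 0 < q m - q (m + 1) := sub_pos.mpr (hqdec m hms)
  have hκ : (0 : ℝ) ≤ k m := Nat.cast_nonneg _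
  have hTa : 0 < weightedGapSum q k m + (q m - q (m + 1)) * k m := by positivity
  rw [sum_cast_mul_eq_S hk0 hS1 hS hm (by omega), hc m hm hms,
    S_eq_inv_weightedGapSum hq0 hqdec hk0 hc1 hS1 hc hS hm (by omega), weightedGapSum_succ,
    if_neg hm.ne']
  field_simp
  ring

end

theorem stmt_11_general (s : ℕ) (q : ℕ → ℝ) (k : ℕ → ℕ)
    (hq0 : q 0 = 1) (hqdec : ∀ i ≤ s, q (i + 1) < q i)
    (hk0 : k 0 = 1) (hkdvd : ∀ i < s, k i ∣ k (i + 1))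
    (c S : ℕ → ℝ) (hc1 : c 1 = 1 / (1 - q 1)) (hS1 : S 1 = c 1)
    (hc : ∀ i, 1 ≤ i → i ≤ s →
      c (i + 1) = -S i ^ 2 * (1 / (q i - q (i + 1)) + (k i : ℝ) * S i)⁻¹)
    (hS : ∀ i, 1 ≤ i → i ≤ s → S (i + 1) = S i + (k i : ℝ) * c (i + 1))
    (Q : Matrix (Fin (k s)) (Fin (k s)) ℝ)
    (hQ : Q = ∑ i ∈ Finset.range (s + 1), (q i - q (i + 1)) • blockOnes (k s) (k i)) :
    IsUnit Q.det ∧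
      Q⁻¹ = c 1 • (1 : Matrix (Fin (k s)) (Fin (k s)) ℝ) +
        ∑ i ∈ Finset.Icc 1 s, c (i + 1) • blockOnes (k s) (k i) := by
  have hk_dvd : ∀ i j, i ≤ j → j ≤ s → k i ∣ k j := by
    intro i j hij hjs
    induction j, hij using Nat.le_induction with
    | base => exact dvd_rfl
    | succ j _ ih => exact (ih (by omega)).trans (hkdvd j (by omega))
  have hR : c 1 • 1 + ∑ i ∈ Icc 1 s, c (i + 1) • blockOnes (k s) (k i) =
      ∑ j ∈ range (s + 1), c (j + 1) • blockOnes (k s) (k j) := by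
    rw [range_eq_Ico, sum_eq_sum_Ico_succ_bot (by omega : 0 < s + 1), zero_add,
      Ico_add_one_right_eq_Icc, hk0, blockOnes_one]
  have hQR : Q * (c 1 • 1 + ∑ i ∈ Icc 1 s, c (i + 1) • blockOnes (k s) (k i)) = 1 := by
    rw [hR, hQ, sum_smul_mul_sum_smul_of_nested (fun i => blockOnes (k s) (k i))
      (fun i => (k i : ℝ))]
    · refine (sum_congr rfl fun m hm => congrArg (· • blockOnes (k s) (k m))
        (gap_mul_sum_add_mul_weightedGapSum_eq_ite hq0 hqdec hk0 hc1 hS1 hc hS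
          (Nat.lt_succ_iff.mp (mem_range.mp hm)))).trans ?_
      simp [ite_smul, hk0, blockOnes_one]
    · intro i j hij hjs
      have hij' := hk_dvd i j hij (by omega)
      have hjs' := hk_dvd j s (by omega) le_rfl
      exact ⟨blockOnes_mul_blockOnes_of_dvd hij' hjs', blockOnes_mul_blockOnes_of_dvd' hij' hjs'⟩
  exact ⟨isUnit_det_of_right_inverse hQR, inv_eq_right_inv hQR⟩

/-- for the `s`-level ultrametric overlap matrix
`Q = Σ_{i=0}^{s} (q_i - q_{i+1}) (I_{k/k_i} ⊗ J_{k_i})` and the recursively defined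
coefficients `c_{w1} = 1/(1-q₁)`, `S₁ = c_{w1}`,
`c_{w(i+1)} = -S_i² (1/(q_i - q_{i+1}) + k_i S_i)⁻¹`, `S_{i+1} = S_i + k_i c_{w(i+1)}`,
the matrix `Q` is invertible and
`Q⁻¹ = c_{w1} I_k + Σ_{i=1}^{s} c_{w(i+1)} (I_{k/k_i} ⊗ J_{k_i})`. -/
theorem stmt_11 (s : ℕ) (hs : 1 ≤ s) (q : ℕ → ℝ) (k : ℕ → ℕ)
    (hq0 : q 0 = 1) (hqlast : q (s + 1) = 0) (hqdec : ∀ i ≤ s, q (i + 1) < q i)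
    (hk0 : k 0 = 1) (hkmono : ∀ i < s, k i < k (i + 1)) (hkdvd : ∀ i < s, k i ∣ k (i + 1))
    (c S : ℕ → ℝ) (hc1 : c 1 = 1 / (1 - q 1)) (hS1 : S 1 = c 1)
    (hc : ∀ i, 1 ≤ i → i ≤ s →
      c (i + 1) = -S i ^ 2 * (1 / (q i - q (i + 1)) + (k i : ℝ) * S i)⁻¹)
    (hS : ∀ i, 1 ≤ i → i ≤ s → S (i + 1) = S i + (k i : ℝ) * c (i + 1))
    (Q : Matrix (Fin (k s)) (Fin (k s)) ℝ)
    (hQ : Q = ∑ i ∈ Finset.range (s + 1), (q i - q (i + 1)) • blockOnes (k s) (k i)) :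
    IsUnit Q.det ∧
      Q⁻¹ = c 1 • (1 : Matrix (Fin (k s)) (Fin (k s)) ℝ) +
        ∑ i ∈ Finset.Icc 1 s, c (i + 1) • blockOnes (k s) (k i) :=
  stmt_11_general s q k hq0 hqdec hk0 hkdvd c S hc1 hS1 hc hS Q hQ
end

section
/- Let s ≥ 1 be an integer, let 1 = q₀ > q₁ > ... > q_s > q_{s+1} = 0 be reals, and let 1 = k₀ < k₁ < ... < k_s = k be integers with k_{i+1}/k_i ∈ ℤ for every i. Define c_{w1} = 1/(1 − q₁), S₁ = c_{w1}, and recursively for i = 1, ..., s: c_{w(i+1)} = −S_i² · ( 1/(q_i − q_{i+1}) + k_i S_i )^{−1} and S_{i+1} = S_i + k_i c_{w(i+1)}. Then for every i ∈ {1, ..., s}: S_i > 0 and c_{w(i+1)} < 0; in fact S_{i+1} = S_i · (1/(q_i − q_{i+1})) / ( 1/(q_i − q_{i+1}) + k_i S_i ) > 0. -/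
/-- for the recursion `c_{w1} = 1/(1-q₁)`, `S₁ = c_{w1}`,
`c_{w(i+1)} = -S_i² (1/(q_i - q_{i+1}) + k_i S_i)⁻¹`, `S_{i+1} = S_i + k_i c_{w(i+1)}`
(with `1 = q₀ > q₁ > ... > q_s > q_{s+1} = 0` and `1 = k₀ < k₁ < ... < k_s`, each ratio
`k_{i+1}/k_i` an integer), one has for every `i ∈ {1, ..., s}`: `S_i > 0`,
`c_{w(i+1)} < 0`, and in fact
`S_{i+1} = S_i · (1/(q_i - q_{i+1})) / (1/(q_i - q_{i+1}) + k_i S_i) > 0`. -/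
theorem stmt_12 (s : ℕ) (hs : 1 ≤ s) (q : ℕ → ℝ) (k : ℕ → ℕ)
    (hq0 : q 0 = 1) (hqlast : q (s + 1) = 0) (hqdec : ∀ i ≤ s, q (i + 1) < q i)
    (hk0 : k 0 = 1) (hkmono : ∀ i < s, k i < k (i + 1)) (hkdvd : ∀ i < s, k i ∣ k (i + 1))
    (c S : ℕ → ℝ) (hc1 : c 1 = 1 / (1 - q 1)) (hS1 : S 1 = c 1)
    (hc : ∀ i, 1 ≤ i → i ≤ s →
      c (i + 1) = -S i ^ 2 * (1 / (q i - q (i + 1)) + (k i : ℝ) * S i)⁻¹)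
    (hS : ∀ i, 1 ≤ i → i ≤ s → S (i + 1) = S i + (k i : ℝ) * c (i + 1)) :
    ∀ i, 1 ≤ i → i ≤ s →
      0 < S i ∧ c (i + 1) < 0 ∧
      S (i + 1) =
        S i * (1 / (q i - q (i + 1))) / (1 / (q i - q (i + 1)) + (k i : ℝ) * S i) ∧
      0 < S (i + 1) := by
  have hkpos : ∀ i, i ≤ s → 0 < k i := by
    intro i
    induction i with
    | zero => intro _; omega
    | succ n ih =>
      intro h
      have := hkmono n (by omega)
      have := ih (by omega)
      omega
  have hS1pos : 0 < S 1 := by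
    have h1 : q 1 < 1 := by
      have := hqdec 0 (by omega); rwa [hq0] at this
    rw [hS1, hc1]
    exact one_div_pos.2 (by linarith)
  have key : ∀ i, 1 ≤ i → i ≤ s → 0 < S i →
      c (i + 1) < 0 ∧
      S (i + 1) =
        S i * (1 / (q i - q (i + 1))) / (1 / (q i - q (i + 1)) + (k i : ℝ) * S i) ∧
      0 < S (i + 1) := by
    intro i h1 h2 hSi
    have hd : 0 < q i - q (i + 1) := sub_pos.2 (hqdec i h2)
    have hki : (0 : ℝ) < (k i : ℝ) := by exact_mod_cast hkpos i h2
    have hA : 0 < 1 / (q i - q (i + 1)) + (k i : ℝ) * S i :=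
      add_pos (by positivity) (mul_pos hki hSi)
    have hcneg : c (i + 1) < 0 := by
      rw [hc i h1 h2]
      have : 0 < S i ^ 2 * (1 / (q i - q (i + 1)) + (k i : ℝ) * S i)⁻¹ := by positivity
      linarith
    have hform : S (i + 1) =
        S i * (1 / (q i - q (i + 1))) / (1 / (q i - q (i + 1)) + (k i : ℝ) * S i) := by
      rw [hS i h1 h2, hc i h1 h2]
      field_simp
      ring
    refine ⟨hcneg, hform, ?_⟩
    rw [hform]
    positivity
  have hpos : ∀ i, 1 ≤ i → i ≤ s → 0 < S i := by
    intro i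
    induction i with
    | zero => omega
    | succ n ih =>
      intro _ h
      rcases Nat.eq_zero_or_pos n with hn | hn
      · subst hn; exact hS1pos
      · exact (key n hn (by omega) (ih hn (by omega))).2.2
  intro i h1 h2
  exact ⟨hpos i h1 h2, key i h1 h2 (hpos i h1 h2)⟩
end
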